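/- arXiv:2106.06021 — 3 statements merged into one kernel-verified Lean document; each statement's English description precedes it below -/
import Mathlib

section
/- For an involution σ in S_n, the number of visible inversions equals (ℓ(σ) + c(σ))/2, where ℓ(σ) is the total number of inversions and c(σ) is the number of 2-cycles of σ. -/
open Finset

/-- Inversions of a permutation. -/
def invSet {n : ℕ} (σ : Equiv.Perm (Fin n)) : Finset (Fin n × Fin n) :=
  Finset.univ.filter (fun p => p.1 < p.2 ∧ σ p.2 < σ p.1)

/-- Visible inversions of a permutation. -/
def visSet {n : ℕ} (σ : Equiv.Perm (Fin n)) : Finset (Fin n × Fin n) :=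
  Finset.univ.filter (fun p => p.1 < p.2 ∧ σ p.2 < σ p.1 ∧ σ p.2 ≤ min p.1 (σ p.1))

/-- 2-cycles of an involution. -/
def cycSet {n : ℕ} (σ : Equiv.Perm (Fin n)) : Finset (Fin n × Fin n) :=
  Finset.univ.filter (fun p => p.1 < p.2 ∧ σ p.1 = p.2)

/-- For an involution, the number of visible inversions is `(ℓ(σ) + c(σ))/2`. -/
theorem card_visible_inversions {n : ℕ} (σ : Equiv.Perm (Fin n))
    (hinv : ∀ i, σ (σ i) = i) :
    (visSet σ).card = ((invSet σ).card + (cycSet σ).card) / 2 := by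
  have hvi : visSet σ ⊆ invSet σ := by
    intro p hp
    simp only [visSet, invSet, Finset.mem_filter, Finset.mem_univ, true_and] at *
    exact ⟨hp.1, hp.2.1⟩
  have hcv : cycSet σ ⊆ visSet σ := by
    intro p hp
    simp only [cycSet, visSet, Finset.mem_filter, Finset.mem_univ, true_and] at *
    obtain ⟨h1, h2⟩ := hp
    have h3 : σ p.2 = p.1 := by rw [← h2, hinv]
    refine ⟨h1, ?_, ?_⟩
    · rw [h3, h2]; exact h1
    · rw [h3, h2]; exact le_min le_rfl h1.le
  have hbij : (invSet σ \ visSet σ).card = (visSet σ \ cycSet σ).card := by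
    apply Finset.card_bij' (fun p _ => (σ p.2, σ p.1)) (fun p _ => (σ p.2, σ p.1))
    · intro p hp
      simp only [invSet, visSet, cycSet, Finset.mem_sdiff, Finset.mem_filter,
        Finset.mem_univ, true_and, not_and, hinv] at hp ⊢
      obtain ⟨⟨h1, h2⟩, h3⟩ := hp
      have h4 := h3 h1 h2
      -- h4 : ¬ σ p.2 ≤ min p.1 (σ p.1), i.e. p.1 < σ p.2 (since σ p.2 < σ p.1)
      have h5 : p.1 < σ p.2 := by
        by_contra h
        push_neg at h
        exact h4 (le_min h h2.le)
      constructor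
      · exact ⟨h2, h1, le_min h5.le h1.le⟩
      · intro _ heq
        have h7 : σ p.2 = p.1 := by rw [heq, hinv]
        exact absurd h7 h5.ne'
    · intro p hp
      simp only [invSet, visSet, cycSet, Finset.mem_sdiff, Finset.mem_filter,
        Finset.mem_univ, true_and, not_and, hinv] at hp ⊢
      obtain ⟨⟨h1, h2, h3⟩, h4⟩ := hp
      have h5 : σ p.2 ≠ p.1 := by
        intro h
        apply h4 h1
        have := congrArg σ h
        rw [hinv] at this
        exact this.symm
      have h6 : σ p.2 < p.1 := lt_of_le_of_ne (le_trans h3 (min_le_left _ _)) h5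
      refine ⟨⟨h2, h1⟩, ?_⟩
      intro _ _ h
      exact absurd (le_trans h (min_le_left _ _)) (not_le.mpr h6)
    · intro p _; simp [hinv]
    · intro p _; simp [hinv]
  have h1 := Finset.card_sdiff_of_subset hvi
  have h2 := Finset.card_sdiff_of_subset hcv
  have h3 := Finset.card_le_card hvi
  have h4 := Finset.card_le_card hcv
  omega
end

section
/- Let R_n(q) = Σ_{σ ∈ I_n} q^{ℓ̂(σ)} where I_n is the set of involutions in S_n and ℓ̂(σ) = (ℓ(σ)+c(σ))/2 with ℓ the inversion count and c the number of 2-cycles. Then R_n(q) = R_{n-1}(q) + q·[n-1]_q·R_{n-2}(q) for n ≥ 2, where [m]_q = 1 + q + ... + q^{m-1}. -/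
open Finset Polynomial

/-- Number of inversions of `σ`. -/
def ell {n : ℕ} (σ : Equiv.Perm (Fin n)) : ℕ :=
  (Finset.univ.filter (fun p : Fin n × Fin n => p.1 < p.2 ∧ σ p.2 < σ p.1)).card

/-- Number of 2-cycles of `σ`. -/
def cyc {n : ℕ} (σ : Equiv.Perm (Fin n)) : ℕ :=
  (Finset.univ.filter (fun i : Fin n => i < σ i)).card

/-- `ℓ̂(σ) = (ℓ(σ) + c(σ))/2`. -/
def lhat {n : ℕ} (σ : Equiv.Perm (Fin n)) : ℕ := (ell σ + cyc σ) / 2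

/-- The `q`-integer `[m]_q = 1 + q + ⋯ + q^{m-1}`. -/
noncomputable def qint (m : ℕ) : Polynomial ℤ := ∑ i ∈ Finset.range m, X ^ i

/-- `R_n(q) = Σ_{σ ∈ I_n} q^{ℓ̂(σ)}`, summing over involutions of `S_n`. -/
noncomputable def R (n : ℕ) : Polynomial ℤ :=
  ∑ σ ∈ Finset.univ.filter (fun σ : Equiv.Perm (Fin n) => σ * σ = 1), X ^ lhat σ

/-!
Split the involutions `σ` of `Fin (m + 2)` according to `σ 0`. If `σ 0 = 0`, deleting `0`
changes neither `ℓ` nor `c`, which gives `R_{m+1}`. Otherwise `σ` swaps `0` with `k + 1`,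
and deleting both points leaves an involution `τ` of the remaining `m` points. The pair
contributes one 2-cycle and `2k + 1` inversions (`(0, k + 1)`, and `(0, x)`, `(x, k + 1)` for
the `k` points `x` with `x < k + 1` resp. `σ x < k + 1`), so `ℓ̂(σ) = ℓ̂(τ) + k + 1`; summing
`q^{k+1}` over `k ≤ m` gives `q [m+1]_q R_m`.
-/

open Equiv Equiv.Perm

lemma ell_eq_sum {n : ℕ} (σ : Perm (Fin n)) :
    ell σ = ∑ a, ∑ b, if a < b ∧ σ b < σ a then 1 else 0 := by
  rw [ell, card_filter, ← Fintype.sum_prod_type']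

lemma cyc_eq_sum {n : ℕ} (σ : Perm (Fin n)) : cyc σ = ∑ i, if i < σ i then 1 else 0 :=
  card_filter _ _

section Decomposition

variable {m : ℕ}

lemma sum_univ_succ_succAbove {M : Type*} [AddCommMonoid M] (f : Fin (m + 2) → M)
    (k : Fin (m + 1)) : ∑ x, f x = f 0 + (f k.succ + ∑ j, f (k.succAbove j).succ) := by
  rw [Fin.sum_univ_succ, Fin.sum_univ_succAbove _ k]

lemma sum_ite_castSucc_lt (k : Fin (m + 1)) :
    (∑ j : Fin m, if j.castSucc < k then 1 else 0) = (k : ℕ) := by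
  rw [← card_filter]
  simp only [Fin.lt_def, Fin.val_castSucc]
  rw [Fin.card_filter_val_lt]
  omega

/-- The analogue of `Equiv.Perm.decomposeFin` with pivot `k` instead of `0`: the inverse sends
`(none, τ)` to the permutation fixing `k` and acting as `τ` on `k.succAbove`. -/
def decomposeFinAt (k : Fin (m + 1)) : Perm (Fin (m + 1)) ≃ Option (Fin m) × Perm (Fin m) :=
  (permCongr (finSuccEquiv' k)).trans decomposeOption

@[simp] lemma decomposeFinAt_symm_none_self (k : Fin (m + 1)) (τ : Perm (Fin m)) :
    (decomposeFinAt k).symm (none, τ) k = k := by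
  simp [decomposeFinAt, permCongr_apply, finSuccEquiv'_at]

@[simp] lemma decomposeFinAt_symm_none_succAbove (k : Fin (m + 1)) (τ : Perm (Fin m))
    (j : Fin m) : (decomposeFinAt k).symm (none, τ) (k.succAbove j) = k.succAbove (τ j) := by
  simp [decomposeFinAt, permCongr_apply]

lemma decomposeFinAt_symm_some_self (k : Fin (m + 1)) (j : Fin m) (τ : Perm (Fin m)) :
    (decomposeFinAt k).symm (some j, τ) k = k.succAbove j := by
  simp [decomposeFinAt, permCongr_apply, finSuccEquiv'_at]

def fixZero (τ : Perm (Fin (m + 1))) : Perm (Fin (m + 2)) := decomposeFin.symm (0, τ)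

def pairZero (k : Fin (m + 1)) (τ : Perm (Fin m)) : Perm (Fin (m + 2)) :=
  decomposeFin.symm (k.succ, (decomposeFinAt k).symm (none, τ))

@[simp] lemma fixZero_zero (τ : Perm (Fin (m + 1))) : fixZero τ 0 = 0 := by
  simp [fixZero]

@[simp] lemma fixZero_succ (τ : Perm (Fin (m + 1))) (i : Fin (m + 1)) :
    fixZero τ i.succ = (τ i).succ := by
  simp [fixZero]

@[simp] lemma pairZero_zero (k : Fin (m + 1)) (τ : Perm (Fin m)) : pairZero k τ 0 = k.succ := by
  simp [pairZero]

@[simp] lemma pairZero_succ_self (k : Fin (m + 1)) (τ : Perm (Fin m)) :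
    pairZero k τ k.succ = 0 := by
  simp [pairZero]

@[simp] lemma pairZero_succ_succAbove (k : Fin (m + 1)) (τ : Perm (Fin m)) (j : Fin m) :
    pairZero k τ (k.succAbove j).succ = (k.succAbove (τ j)).succ := by
  simp [pairZero, swap_apply_of_ne_of_ne, Fin.succAbove_ne]

lemma fixZero_mul_self_eq_one_iff (τ : Perm (Fin (m + 1))) :
    fixZero τ * fixZero τ = 1 ↔ τ * τ = 1 := by
  simp only [Perm.ext_iff, Perm.mul_apply, Perm.one_apply]
  refine ⟨fun h i => by simpa using h i.succ, fun h x => ?_⟩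
  refine Fin.cases ?_ (fun i => ?_) x <;> simp [h]

lemma pairZero_mul_self_eq_one_iff (k : Fin (m + 1)) (τ : Perm (Fin m)) :
    pairZero k τ * pairZero k τ = 1 ↔ τ * τ = 1 := by
  simp only [Perm.ext_iff, Perm.mul_apply, Perm.one_apply]
  refine ⟨fun h j => by simpa using h (k.succAbove j).succ, fun h x => ?_⟩
  refine Fin.cases (by simp) (fun i => ?_) x
  refine Fin.succAboveCases k (by simp) (fun j => ?_) i
  simp [h]

lemma ell_fixZero (τ : Perm (Fin (m + 1))) : ell (fixZero τ) = ell τ := by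
  simp [ell_eq_sum, Fin.sum_univ_succ, -sum_boole]

lemma cyc_fixZero (τ : Perm (Fin (m + 1))) : cyc (fixZero τ) = cyc τ := by
  simp [cyc_eq_sum, Fin.sum_univ_succ, -sum_boole]

lemma ell_pairZero (k : Fin (m + 1)) (τ : Perm (Fin m)) :
    ell (pairZero k τ) = ell τ + 2 * k + 1 := by
  simp only [ell_eq_sum, sum_univ_succ_succAbove _ k, pairZero_zero, pairZero_succ_self,
    pairZero_succ_succAbove, Fin.succ_lt_succ_iff, Fin.succAbove_lt_succAbove_iff,
    Fin.succAbove_lt_iff_castSucc_lt, Fin.succ_pos, not_lt_zero, lt_self_iff_false, true_and,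
    and_true, false_and, and_false, and_self, ↓reduceIte, sum_const_zero, zero_add, add_zero,
    sum_add_distrib, Equiv.sum_comp τ (fun j => if j.castSucc < k then 1 else 0),
    sum_ite_castSucc_lt]
  omega

lemma cyc_pairZero (k : Fin (m + 1)) (τ : Perm (Fin m)) : cyc (pairZero k τ) = cyc τ + 1 := by
  simp [cyc_eq_sum, sum_univ_succ_succAbove _ k, -sum_boole, add_comm]

lemma lhat_fixZero (τ : Perm (Fin (m + 1))) : lhat (fixZero τ) = lhat τ := by
  rw [lhat, lhat, ell_fixZero, cyc_fixZero]

lemma lhat_pairZero (k : Fin (m + 1)) (τ : Perm (Fin m)) :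
    lhat (pairZero k τ) = lhat τ + (k + 1) := by
  rw [lhat, lhat, ell_pairZero, cyc_pairZero]
  omega

end Decomposition

noncomputable def invWeight {n : ℕ} (σ : Perm (Fin n)) : ℤ[X] :=
  if σ * σ = 1 then X ^ lhat σ else 0

lemma R_eq_sum_invWeight (n : ℕ) : R n = ∑ σ : Perm (Fin n), invWeight σ :=
  sum_filter _ _

section Recurrence

variable {m : ℕ}

lemma invWeight_fixZero (τ : Perm (Fin (m + 1))) : invWeight (fixZero τ) = invWeight τ := by
  simp only [invWeight, fixZero_mul_self_eq_one_iff, lhat_fixZero]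

lemma invWeight_pairZero (k : Fin (m + 1)) (τ : Perm (Fin m)) :
    invWeight (pairZero k τ) = X ^ ((k : ℕ) + 1) * invWeight τ := by
  simp only [invWeight, pairZero_mul_self_eq_one_iff, lhat_pairZero, pow_add, mul_ite, mul_zero]
  rw [mul_comm]

/-- Here `σ 0 = k.succ` but `σ k.succ ≠ 0`, so `σ` is not an involution. -/
lemma invWeight_decomposeFin_symm_some (k : Fin (m + 1)) (j : Fin m) (τ : Perm (Fin m)) :
    invWeight (decomposeFin.symm (k.succ, (decomposeFinAt k).symm (some j, τ))) = 0 := by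
  refine if_neg fun h => ?_
  have := congrArg (· 0) h
  simp [decomposeFinAt_symm_some_self, swap_apply_of_ne_of_ne, Fin.succAbove_ne] at this

lemma sum_invWeight_succ_succ :
    ∑ σ : Perm (Fin (m + 2)), invWeight σ =
      ∑ τ : Perm (Fin (m + 1)), invWeight τ +
        (∑ k : Fin (m + 1), X ^ ((k : ℕ) + 1)) * ∑ τ : Perm (Fin m), invWeight τ := by
  rw [← decomposeFin.symm.sum_comp, Fintype.sum_prod_type, Fin.sum_univ_succ, sum_mul]
  congr 1
  · exact sum_congr rfl fun τ _ => invWeight_fixZero τ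
  · refine sum_congr rfl fun k _ => ?_
    rw [← (decomposeFinAt k).symm.sum_comp, Fintype.sum_prod_type, Fintype.sum_option, mul_sum]
    simp only [invWeight_decomposeFin_symm_some, sum_const_zero, add_zero]
    exact sum_congr rfl fun τ _ => invWeight_pairZero k τ

end Recurrence

lemma sum_X_pow_succ_eq_X_mul_qint (m : ℕ) : ∑ k : Fin m, (X : ℤ[X]) ^ ((k : ℕ) + 1) = X * qint m := by
  rw [qint, mul_sum, Fin.sum_univ_eq_sum_range (fun i => (X : ℤ[X]) ^ (i + 1))]
  simp only [pow_succ']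

/-- `R_n(q) = R_{n-1}(q) + q [n-1]_q R_{n-2}(q)` for `n ≥ 2`. -/
theorem R_recurrence (n : ℕ) (hn : 2 ≤ n) :
    R n = R (n - 1) + X * qint (n - 1) * R (n - 2) := by
  obtain ⟨m, rfl⟩ : ∃ m, n = m + 2 := ⟨n - 2, by omega⟩
  simp only [Nat.add_sub_cancel, show m + 2 - 1 = m + 1 by omega, R_eq_sum_invWeight]
  rw [sum_invWeight_succ_succ, sum_X_pow_succ_eq_X_mul_qint]
end

section
/- For a fixed-point-free involution τ in S_{2n}, |{visible inversions of τ}| = (ℓ(τ) - n)/2 + n, i.e., the number of visible inversions that are not 2-cycles is (ℓ(τ)-n)/2. -/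
open Finset

/-- For a fixed-point-free involution `τ ∈ S_{2n}`, the number of visible inversions
is `(ℓ(τ)-n)/2 + n`, and the number of visible inversions that are not 2-cycles
is `(ℓ(τ)-n)/2`. -/
theorem fpf_visible_inversions (n : ℕ) (τ : Equiv.Perm (Fin (2 * n)))
    (hinv : ∀ i, τ (τ i) = i) (hfpf : ∀ i, τ i ≠ i) :
    (visSet τ).card = ((invSet τ).card - n) / 2 + n
    ∧ (visSet τ \ cycSet τ).card = ((invSet τ).card - n) / 2 := by
  classical
  have hiff : ∀ i j : Fin (2 * n), τ i = j → τ j = i := fun i j h => by rw [← h, hinv]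
  -- cycSet ⊆ visSet
  have hcv : cycSet τ ⊆ visSet τ := by
    intro p hp
    simp only [cycSet, visSet, mem_filter, mem_univ, true_and] at hp ⊢
    obtain ⟨h1, h2⟩ := hp
    have h3 : τ p.2 = p.1 := hiff _ _ h2
    refine ⟨h1, ?_, ?_⟩
    · rw [h3, h2]; exact h1
    · rw [h3]; exact le_min le_rfl (h2 ▸ h1.le)
  have hvi : visSet τ ⊆ invSet τ := by
    intro p hp
    simp only [visSet, invSet, mem_filter, mem_univ, true_and] at hp ⊢
    exact ⟨hp.1, hp.2.1⟩
  -- card cycSet = n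
  have hhalf : (univ.filter (fun i : Fin (2 * n) => i < τ i)).card = n := by
    have heq : (univ.filter (fun i : Fin (2 * n) => i < τ i)).card
        = (univ.filter (fun i : Fin (2 * n) => τ i < i)).card := by
      apply card_nbij' (fun i => τ i) (fun i => τ i)
      · intro a ha
        simp only [mem_coe, mem_filter, mem_univ, true_and] at ha ⊢
        rw [hinv]; exact ha
      · intro a ha
        simp only [mem_coe, mem_filter, mem_univ, true_and] at ha ⊢
        rw [hinv]; exact ha
      · intro a _; exact hinv a
      · intro a _; exact hinv a
    have hcompl : (univ.filter (fun i : Fin (2 * n) => τ i < i))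
        = univ.filter (fun i : Fin (2 * n) => ¬ i < τ i) := by
      apply filter_congr
      intro i _
      simp only [eq_iff_iff, not_lt]
      constructor
      · exact le_of_lt
      · intro h; exact lt_of_le_of_ne h (hfpf i)
    have := Finset.card_filter_add_card_filter_not
      (s := (univ : Finset (Fin (2 * n)))) (p := fun i => i < τ i)
    rw [Finset.card_univ, Fintype.card_fin, ← hcompl] at this
    omega
  have hcyc : (cycSet τ).card = n := by
    refine Eq.trans ?_ hhalf
    apply card_nbij' (fun p => p.1) (fun i => (i, τ i))
    · intro p hp
      simp only [cycSet, mem_coe, mem_filter, mem_univ, true_and] at hp ⊢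
      rw [hp.2]; exact hp.1
    · intro i hi
      simp only [mem_coe, mem_filter, mem_univ, true_and] at hi
      simp only [cycSet, mem_coe, mem_filter, mem_univ, true_and]
      exact ⟨hi, trivial⟩
    · intro p hp
      simp only [cycSet, mem_coe, mem_filter, mem_univ, true_and] at hp
      beta_reduce; rw [hp.2]
    · intro i _; rfl
  -- membership characterizations
  have hVmem : ∀ p : Fin (2 * n) × Fin (2 * n),
      p ∈ visSet τ \ cycSet τ ↔ p.1 < p.2 ∧ τ p.2 < τ p.1 ∧ τ p.2 < p.1 := by
    intro p
    simp only [mem_sdiff, visSet, cycSet, mem_filter, mem_univ, true_and]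
    constructor
    · rintro ⟨⟨h1, h2, h3⟩, h4⟩
      refine ⟨h1, h2, ?_⟩
      have hle : τ p.2 ≤ p.1 := (le_min_iff.mp h3).1
      rcases lt_or_eq_of_le hle with h | h
      · exact h
      · exact absurd ⟨h1, hiff _ _ h⟩ h4
    · rintro ⟨h1, h2, h3⟩
      refine ⟨⟨h1, h2, le_min h3.le h2.le⟩, ?_⟩
      rintro ⟨-, h4⟩
      exact absurd (hiff _ _ h4) h3.ne
  have hUmem : ∀ p : Fin (2 * n) × Fin (2 * n),
      p ∈ invSet τ \ visSet τ ↔ p.1 < p.2 ∧ τ p.2 < τ p.1 ∧ p.1 < τ p.2 := by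
    intro p
    simp only [mem_sdiff, invSet, visSet, mem_filter, mem_univ, true_and]
    constructor
    · rintro ⟨⟨h1, h2⟩, h3⟩
      refine ⟨h1, h2, ?_⟩
      by_contra h
      push_neg at h
      exact h3 ⟨h1, h2, le_min h h2.le⟩
    · rintro ⟨h1, h2, h3⟩
      refine ⟨⟨h1, h2⟩, ?_⟩
      rintro ⟨-, -, h4⟩
      exact absurd ((le_min_iff.mp h4).1) (not_le.mpr h3)
  -- bijection between U and V
  have hUV : (invSet τ \ visSet τ).card = (visSet τ \ cycSet τ).card := by
    apply card_nbij' (fun p => (τ p.2, τ p.1)) (fun p => (τ p.2, τ p.1))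
    · intro p hp
      rw [mem_coe, hUmem] at hp
      rw [mem_coe, hVmem]
      obtain ⟨h1, h2, h3⟩ := hp
      exact ⟨h2, by rw [hinv, hinv]; exact h1, by rw [hinv]; exact h3⟩
    · intro p hp
      rw [mem_coe, hVmem] at hp
      rw [mem_coe, hUmem]
      obtain ⟨h1, h2, h3⟩ := hp
      exact ⟨h2, by rw [hinv, hinv]; exact h1, by rw [hinv]; exact h3⟩
    · intro p _; simp [hinv]
    · intro p _; simp [hinv]
  -- assemble
  have e1 : (invSet τ \ visSet τ).card + (visSet τ).card = (invSet τ).card :=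
    Finset.card_sdiff_add_card_eq_card hvi
  have e2 : (visSet τ \ cycSet τ).card + (cycSet τ).card = (visSet τ).card :=
    Finset.card_sdiff_add_card_eq_card hcv
  omega
end
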